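/- Leave-one-out bound for a transductive shrinkage linear predictor: Let (x_i, y_i)_{i=1}^n with x_i ∈ ℝ^d and y_i ∈ ℝ satisfying y_i² ≤ m² for all i. Let A = Σ_{j=1}^n x_j x_jᵀ and let A† be the Moore–Penrose pseudoinverse of A (i.e., A A† A = A, A† A A† = A†, (A A†)ᵀ = A A†, and (A† A)ᵀ = A† A). Define β̂ = A† Σ_{j=1}^n x_j y_j and, for each i, β̂_{−i} = A† Σ_{j≠i} x_j y_j. Then Σ_{i=1}^n (y_i − x_iᵀ β̂_{−i})² ≤ 2 Σ_{i=1}^n (y_i − x_iᵀ β̂)² + 2 m² · rank(A). -/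
import Mathlib


open Matrix

private lemma vecMulVec_mulVec' {d : ℕ} (v w u : Fin d → ℝ) :
    (Matrix.vecMulVec v w) *ᵥ u = (w ⬝ᵥ u) • v := by
  ext k
  simp only [Matrix.mulVec, dotProduct, Matrix.vecMulVec_apply, Pi.smul_apply,
    smul_eq_mul]
  rw [Finset.sum_mul]
  exact Finset.sum_congr rfl fun j _ => by ring


private lemma dot_mulVec_left' {d : ℕ} (M : Matrix (Fin d) (Fin d) ℝ) (a b : Fin d → ℝ) :
    (M *ᵥ a) ⬝ᵥ b = a ⬝ᵥ (Mᵀ *ᵥ b) := by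
  rw [dotProduct_comm, Matrix.dotProduct_mulVec, ← Matrix.mulVec_transpose,
    dotProduct_comm]

private lemma trace_mul_vecMulVec {d : ℕ} (M : Matrix (Fin d) (Fin d) ℝ) (v : Fin d → ℝ) :
    Matrix.trace (M * Matrix.vecMulVec v v) = v ⬝ᵥ (M *ᵥ v) := by
  simp only [Matrix.trace, Matrix.diag_apply, Matrix.mul_apply, Matrix.vecMulVec_apply,
    dotProduct, Matrix.mulVec, Finset.mul_sum]
  exact Finset.sum_congr rfl fun i _ => Finset.sum_congr rfl fun k _ => by ring

private lemma sum_mulVec' {α : Type*} {d : ℕ} (s : Finset α)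
    (M : α → Matrix (Fin d) (Fin d) ℝ) (v : Fin d → ℝ) :
    (∑ j ∈ s, M j) *ᵥ v = ∑ j ∈ s, (M j) *ᵥ v := by
  ext i
  simp only [Matrix.mulVec, dotProduct, Finset.sum_apply, Matrix.sum_apply,
    Finset.sum_mul]
  exact Finset.sum_comm

private lemma dotProduct_sum' {α : Type*} {d : ℕ} (s : Finset α)
    (v : Fin d → ℝ) (w : α → Fin d → ℝ) :
    v ⬝ᵥ (∑ j ∈ s, w j) = ∑ j ∈ s, v ⬝ᵥ w j := by
  simp only [dotProduct, Finset.sum_apply, Finset.mul_sum]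
  exact Finset.sum_comm

/-- **Leave-one-out bound for a transductive shrinkage linear predictor.**
With Gram matrix `A = ∑ j x_j x_jᵀ`, its Moore–Penrose pseudoinverse `Ad` (characterized
by the four Penrose equations), full-sample estimator `β = A† ∑ j y_j x_j`, shrinkage
leave-one-out estimators `βm i = A† ∑_{j≠i} y_j x_j`, and `y_i² ≤ m²`, we have
`∑ i (y_i − x_iᵀ βm i)² ≤ 2 ∑ i (y_i − x_iᵀ β)² + 2 m²·rank(A)`. -/
theorem shrinkage_loo_linear_bound
    {d n : ℕ} (x : Fin n → Fin d → ℝ) (y : Fin n → ℝ) (m : ℝ)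
    (hy : ∀ i, (y i) ^ 2 ≤ m ^ 2)
    (A Ad : Matrix (Fin d) (Fin d) ℝ)
    (hA : A = ∑ j, Matrix.vecMulVec (x j) (x j))
    (h1 : A * Ad * A = A) (h2 : Ad * A * Ad = Ad)
    (h3 : (A * Ad)ᵀ = A * Ad) (h4 : (Ad * A)ᵀ = Ad * A)
    (β : Fin d → ℝ) (hβ : β = Ad.mulVec (∑ j, y j • x j))
    (βm : Fin n → Fin d → ℝ)
    (hβm : ∀ i, βm i = Ad.mulVec (∑ j ∈ Finset.univ.erase i, y j • x j)) :
    ∑ i, (y i - x i ⬝ᵥ βm i) ^ 2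
      ≤ 2 * ∑ i, (y i - x i ⬝ᵥ β) ^ 2 + 2 * m ^ 2 * (A.rank : ℝ) := by
  -- A is symmetric
  have hAT : Aᵀ = A := by
    rw [hA, Matrix.transpose_sum]
    refine Finset.sum_congr rfl fun j _ => ?_
    ext i k
    simp [Matrix.vecMulVec_apply, mul_comm]
  set C := Adᵀ with hC
  -- Penrose equations for C
  have d1 : A * C * A = A := by
    have := congrArg Matrix.transpose h1
    simpa only [Matrix.transpose_mul, hAT, Matrix.mul_assoc, hC] using this
  have d2 : C * A * C = C := by
    have := congrArg Matrix.transpose h2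
    simpa only [Matrix.transpose_mul, hAT, Matrix.mul_assoc, hC] using this
  have d3 : (A * C)ᵀ = A * C := by
    calc (A * C)ᵀ = Ad * A := by
          rw [hC, Matrix.transpose_mul, Matrix.transpose_transpose, hAT]
      _ = (Ad * A)ᵀ := h4.symm
      _ = A * C := by rw [Matrix.transpose_mul, hAT, hC]
  have d4 : (C * A)ᵀ = C * A := by
    calc (C * A)ᵀ = A * Ad := by
          rw [hC, Matrix.transpose_mul, Matrix.transpose_transpose, hAT]
      _ = (A * Ad)ᵀ := h3.symm
      _ = C * A := by rw [Matrix.transpose_mul, hAT, hC]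
  -- uniqueness argument: Ad = Adᵀ
  have key1 : A * Ad = A * C := by
    calc A * Ad = (A * C * A) * Ad := by rw [d1]
      _ = (A * C) * (A * Ad) := by simp only [Matrix.mul_assoc]
      _ = (A * C)ᵀ * (A * Ad)ᵀ := by rw [d3, h3]
      _ = ((A * Ad) * (A * C))ᵀ := (Matrix.transpose_mul _ _).symm
      _ = ((A * Ad * A) * C)ᵀ := by simp only [Matrix.mul_assoc]
      _ = (A * C)ᵀ := by rw [h1]
      _ = A * C := d3
  have key2 : Ad * A = C * A := by
    calc Ad * A = Ad * (A * C * A) := by rw [d1]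
      _ = (Ad * A) * (C * A) := by simp only [Matrix.mul_assoc]
      _ = (Ad * A)ᵀ * (C * A)ᵀ := by rw [h4, d4]
      _ = ((C * A) * (Ad * A))ᵀ := (Matrix.transpose_mul _ _).symm
      _ = (C * (A * Ad * A))ᵀ := by simp only [Matrix.mul_assoc]
      _ = (C * A)ᵀ := by rw [h1]
      _ = C * A := d4
  have hsym : Adᵀ = Ad := by
    calc Adᵀ = C := hC.symm ▸ rfl
      _ = C * A * C := d2.symm
      _ = (Ad * A) * C := by rw [key2]
      _ = Ad * (A * C) := by simp only [Matrix.mul_assoc]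
      _ = Ad * (A * Ad) := by rw [key1]
      _ = Ad * A * Ad := by simp only [Matrix.mul_assoc]
      _ = Ad := h2
  clear key1 key2 d1 d2 d3 d4
  -- the quadratic form of A
  have quad : ∀ u : Fin d → ℝ, u ⬝ᵥ (A *ᵥ u) = ∑ j, (x j ⬝ᵥ u) ^ 2 := by
    intro u
    rw [hA, sum_mulVec', dotProduct_sum']
    refine Finset.sum_congr rfl fun j _ => ?_
    rw [vecMulVec_mulVec', dotProduct_smul, smul_eq_mul,
      dotProduct_comm u (x j), sq]
  -- leverage scores
  have hh : ∀ i, (x i ⬝ᵥ (Ad *ᵥ x i)) ^ 2 ≤ x i ⬝ᵥ (Ad *ᵥ x i) := by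
    intro i
    set u := Ad *ᵥ x i with hu
    have e1 : u ⬝ᵥ (A *ᵥ u) = x i ⬝ᵥ (Ad *ᵥ x i) := by
      calc u ⬝ᵥ (A *ᵥ u) = (Ad *ᵥ x i) ⬝ᵥ ((A * Ad) *ᵥ x i) := by
            rw [hu, Matrix.mulVec_mulVec]
        _ = x i ⬝ᵥ (Adᵀ *ᵥ ((A * Ad) *ᵥ x i)) := dot_mulVec_left' _ _ _
        _ = x i ⬝ᵥ ((Ad * (A * Ad)) *ᵥ x i) := by rw [hsym, Matrix.mulVec_mulVec]
        _ = x i ⬝ᵥ (Ad *ᵥ x i) := by rw [← Matrix.mul_assoc, h2]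
    have e2 : (x i ⬝ᵥ u) ^ 2 ≤ u ⬝ᵥ (A *ᵥ u) := by
      rw [quad u]
      exact Finset.single_le_sum (fun j _ => sq_nonneg (x j ⬝ᵥ u)) (Finset.mem_univ i)
    rw [e1] at e2
    exact e2
  -- sum of leverage scores equals trace
  have htr : ∑ i, x i ⬝ᵥ (Ad *ᵥ x i) = Matrix.trace (Ad * A) := by
    rw [hA, Finset.mul_sum, Matrix.trace_sum]
    exact Finset.sum_congr rfl fun j _ => (trace_mul_vecMulVec Ad (x j)).symm
  -- Ad * A is idempotent
  have hPP : (Ad * A) * (Ad * A) = Ad * A := by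
    calc (Ad * A) * (Ad * A) = (Ad * A * Ad) * A := by simp only [Matrix.mul_assoc]
      _ = Ad * A := by rw [h2]
  -- rank
  have hr1 : (Ad * A).rank = A.rank := by
    refine le_antisymm (Matrix.rank_mul_le_right Ad A) ?_
    have hAA : A = A * (Ad * A) := by rw [← Matrix.mul_assoc, h1]
    calc A.rank = (A * (Ad * A)).rank := by rw [← hAA]
      _ ≤ (Ad * A).rank := Matrix.rank_mul_le_right _ _
  have hproj : LinearMap.IsProj (LinearMap.range (Ad * A).mulVecLin) (Ad * A).mulVecLin := by
    constructor
    · intro v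
      exact LinearMap.mem_range_self _ v
    · rintro v ⟨w, rfl⟩
      have hcomp : (Ad * A).mulVecLin ∘ₗ (Ad * A).mulVecLin = (Ad * A).mulVecLin := by
        rw [← Matrix.mulVecLin_mul, hPP]
      exact DFunLike.congr_fun hcomp w
  have htrace : Matrix.trace (Ad * A) = ((Ad * A).rank : ℝ) := by
    have ht := hproj.trace
    rw [LinearMap.trace_eq_matrix_trace ℝ (Pi.basisFun ℝ (Fin d)),
      LinearMap.toMatrix_eq_toMatrix', ← Matrix.toLin'_apply',
      LinearMap.toMatrix'_toLin'] at ht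
    rw [ht]
    rfl
  -- splitting the residual
  have hsplit : ∀ i, y i - x i ⬝ᵥ βm i
      = (y i - x i ⬝ᵥ β) + y i * (x i ⬝ᵥ (Ad *ᵥ x i)) := by
    intro i
    have hbm : βm i = β - y i • (Ad *ᵥ x i) := by
      rw [hβm i, hβ, Finset.sum_erase_eq_sub (Finset.mem_univ i), Matrix.mulVec_sub,
        Matrix.mulVec_smul]
    rw [hbm, dotProduct_sub, dotProduct_smul, smul_eq_mul]
    ring
  -- put everything together
  calc ∑ i, (y i - x i ⬝ᵥ βm i) ^ 2
      = ∑ i, ((y i - x i ⬝ᵥ β) + y i * (x i ⬝ᵥ (Ad *ᵥ x i))) ^ 2 :=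
        Finset.sum_congr rfl fun i _ => by rw [hsplit i]
    _ ≤ ∑ i, (2 * (y i - x i ⬝ᵥ β) ^ 2 + 2 * (m ^ 2 * (x i ⬝ᵥ (Ad *ᵥ x i)))) := by
        refine Finset.sum_le_sum fun i _ => ?_
        nlinarith [hh i, hy i, sq_nonneg (x i ⬝ᵥ (Ad *ᵥ x i)), sq_nonneg m,
          sq_nonneg ((y i - x i ⬝ᵥ β) - y i * (x i ⬝ᵥ (Ad *ᵥ x i))),
          sq_nonneg (y i * (x i ⬝ᵥ (Ad *ᵥ x i)))]
    _ = 2 * ∑ i, (y i - x i ⬝ᵥ β) ^ 2 + 2 * m ^ 2 * ∑ i, x i ⬝ᵥ (Ad *ᵥ x i) := by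
        rw [Finset.sum_add_distrib, ← Finset.mul_sum, ← Finset.mul_sum, ← Finset.mul_sum]
        ring
    _ = 2 * ∑ i, (y i - x i ⬝ᵥ β) ^ 2 + 2 * m ^ 2 * (A.rank : ℝ) := by
        rw [htr, htrace, hr1]
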